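/- Let n be an odd positive integer with B(n^2) ≥ 2·B(n) + 1. Then there exist positive integers ν and h such that n' = n·2^ν - (2^h - 1) satisfies B(n'^2) = 2·B(n') - 1. Moreover one can take h = k + 1 and ν = B(n^2) - 2·B(n) + 2h, where k is the length of the binary expansion of n, so that ν < 4k + 2. -/
import Mathlib

def B (n : ℕ) : ℕ := (Nat.digits 2 n).sum

lemma B_zero : B 0 = 0 := by simp [B]

lemma B_rec (x : ℕ) : B x = x % 2 + B (x / 2) := by
  rcases Nat.eq_zero_or_pos x with h | h
  · subst h; simp [B]
  · unfold B
    rw [Nat.digits_def' (by norm_num : 1 < 2) h, List.sum_cons]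

lemma B_one : B 1 = 1 := by simp [B]

lemma B_split (e a b : ℕ) (ha : a < 2 ^ e) : B (a + b * 2 ^ e) = B a + B b := by
  induction e generalizing a b with
  | zero =>
    interval_cases a
    simp [B_zero]
  | succ e ih =>
    rw [B_rec (a + b * 2 ^ (e + 1)), B_rec a]
    have hre : b * 2 ^ (e + 1) = (b * 2 ^ e) * 2 := by ring
    rw [hre]
    have h1 : (a + (b * 2 ^ e) * 2) % 2 = a % 2 := by omega
    have h2 : (a + (b * 2 ^ e) * 2) / 2 = a / 2 + b * 2 ^ e := by omega
    have h3 : a / 2 < 2 ^ e := by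
      have : (2:ℕ) ^ (e+1) = 2 ^ e * 2 := by ring
      omega
    rw [h1, h2, ih _ _ h3]
    omega

lemma B_pow_sub_one (m : ℕ) : B (2 ^ m - 1) = m := by
  induction m with
  | zero => simp [B]
  | succ m ih =>
    have t : 1 ≤ 2 ^ m := Nat.one_le_two_pow
    have hre : (2:ℕ) ^ (m + 1) = 2 ^ m * 2 := by ring
    rw [hre, B_rec]
    have h1 : (2 ^ m * 2 - 1) % 2 = 1 := by omega
    have h2 : (2 ^ m * 2 - 1) / 2 = 2 ^ m - 1 := by omega
    rw [h1, h2, ih]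
    omega

lemma B_pred_odd (n : ℕ) (hn : Odd n) : B (n - 1) + 1 = B n := by
  obtain ⟨t, rfl⟩ := hn
  rw [B_rec (2 * t + 1 - 1), B_rec (2 * t + 1)]
  have h1 : (2 * t + 1 - 1) % 2 = 0 := by omega
  have h2 : (2 * t + 1 - 1) / 2 = t := by omega
  have h3 : (2 * t + 1) % 2 = 1 := by omega
  have h4 : (2 * t + 1) / 2 = t := by omega
  rw [h1, h2, h3, h4]; omega

lemma B_compl (m : ℕ) : ∀ x, x < 2 ^ m → B x + B (2 ^ m - 1 - x) = m := by
  induction m with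
  | zero => intro x hx; interval_cases x; simp [B]
  | succ m ih =>
    intro x hx
    have t1 : 1 ≤ 2 ^ m := Nat.one_le_two_pow
    have hre : (2:ℕ) ^ (m + 1) = 2 ^ m * 2 := by ring
    rw [hre] at hx ⊢
    rw [B_rec x, B_rec (2 ^ m * 2 - 1 - x)]
    have h2 : (2 ^ m * 2 - 1 - x) / 2 = 2 ^ m - 1 - x / 2 := by omega
    have h3 : x / 2 < 2 ^ m := by omega
    rw [h2]
    have := ih (x / 2) h3
    omega

lemma B_pow_sub (m n : ℕ) (hn : Odd n) (h1 : 0 < n) (h2 : n ≤ 2 ^ m) :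
    B (2 ^ m - n) + B n = m + 1 := by
  have h3 : n - 1 < 2 ^ m := by omega
  have h4 := B_compl m (n - 1) h3
  have h5 := B_pred_odd n hn
  have h6 : 2 ^ m - 1 - (n - 1) = 2 ^ m - n := by omega
  rw [h6] at h4
  omega

lemma B_le (m : ℕ) : ∀ x, x < 2 ^ m → B x ≤ m := by
  induction m with
  | zero => intro x hx; interval_cases x; simp [B]
  | succ m ih =>
    intro x hx
    have hre : (2:ℕ) ^ (m + 1) = 2 ^ m * 2 := by ring
    rw [B_rec]
    have := ih (x / 2) (by omega)
    omega

lemma B_two_mul (n : ℕ) : B (2 * n) = B n := by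
  rw [B_rec (2 * n)]
  have h1 : (2 * n) % 2 = 0 := by omega
  have h2 : (2 * n) / 2 = n := by omega
  rw [h1, h2]; omega

lemma B_pos_of_odd (n : ℕ) (hn : Odd n) : 1 ≤ B n := by
  rw [B_rec]
  have := Nat.odd_iff.mp hn
  omega

lemma key (n h s : ℕ) (hodd : Odd n) (hh : 1 ≤ h) (h2n : 2 * n < 2 ^ h) :
    B (n * 2 ^ (2 * h + 1 + s) - (2 ^ h - 1)) = B n + h + s + 1 ∧
    B ((n * 2 ^ (2 * h + 1 + s) - (2 ^ h - 1)) ^ 2) + 1 = B (n ^ 2) + 2 * h + s + 1 := by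
  have hn1 : 1 ≤ n := hodd.pos
  have hq2 : 2 ≤ 2 ^ h := by
    calc (2:ℕ) = 2 ^ 1 := (pow_one 2).symm
    _ ≤ 2 ^ h := Nat.pow_le_pow_right (by norm_num) hh
  have hq1 : (2:ℕ) ^ h ≤ 2 ^ (2 * h + 1 + s) := Nat.pow_le_pow_right (by norm_num) (by omega)
  have hqq : (2:ℕ) ^ h * 2 ^ h ≤ 2 ^ (2 * h + 1 + s) := by
    rw [← pow_add]
    exact Nat.pow_le_pow_right (by norm_num) (by omega)
  have hmh : (2:ℕ) ^ h ≤ 2 ^ (h + s) := Nat.pow_le_pow_right (by norm_num) (by omega)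
  have hq11 : (2:ℕ) ^ (h + 1) = 2 ^ h * 2 := pow_succ 2 h
  have hq1' : (2:ℕ) ^ (h + 1) ≤ 2 ^ (2 * h + 1 + s) :=
    Nat.pow_le_pow_right (by norm_num) (by omega)
  -- part 1
  have e0 : n * 2 ^ (2 * h + 1 + s) = 2 ^ (2 * h + 1 + s) + (n - 1) * 2 ^ (2 * h + 1 + s) := by
    nth_rewrite 1 [show n = (n - 1) + 1 from by omega]
    ring
  have e1 : n * 2 ^ (2 * h + 1 + s) - (2 ^ h - 1) = (2 ^ (2 * h + 1 + s) - 2 ^ h + 1) + (n - 1) * 2 ^ (2 * h + 1 + s) := by omega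
  have e2 : (2:ℕ) ^ (2 * h + 1 + s) - 2 ^ h + 1 = 1 + (2 ^ (h + 1 + s) - 1) * 2 ^ h := by
    have e2a : (2 ^ (h + 1 + s) - 1) * 2 ^ h = 2 ^ (2 * h + 1 + s) - 2 ^ h := by
      rw [Nat.sub_mul, one_mul, ← pow_add]
      congr 2
      omega
    omega
  have K1 : B (n * 2 ^ (2 * h + 1 + s) - (2 ^ h - 1)) = B n + h + s + 1 := by
    rw [e1, B_split (2 * h + 1 + s) _ (n - 1) (by omega), e2, B_split h 1 _ (by omega), B_one,
      B_pow_sub_one]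
    have := B_pred_odd n hodd
    omega
  refine ⟨K1, ?_⟩
  -- part 2
  obtain ⟨b, hb⟩ : ∃ b, 2 ^ h = b + 1 := ⟨2 ^ h - 1, by omega⟩
  have hb' : 2 ^ h - 1 = b := by omega
  have hba : b ≤ n * 2 ^ (2 * h + 1 + s) := by omega
  have h2b22 : n * 2 ^ (h + 1) ≤ 2 ^ h * 2 ^ h := by
    rw [pow_succ]
    calc n * (2 ^ h * 2) = (2 * n) * 2 ^ h := by ring
    _ ≤ 2 ^ h * 2 ^ h := Nat.mul_le_mul_right _ (by omega)
  have h21 : n * 2 ^ (h + 1) = 2 * n * b + 2 * n := by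
    rw [pow_succ, hb]; ring
  have h2nb : 2 * n * b < 2 ^ (2 * h + 1 + s) := by omega
  have hCle : 2 * n * b ≤ n ^ 2 * 2 ^ (2 * h + 1 + s) := by
    calc 2 * n * b = n * (2 * b) := by ring
    _ ≤ n * 2 ^ (2 * h + 1 + s) := Nat.mul_le_mul_left n (by omega)
    _ ≤ n ^ 2 * 2 ^ (2 * h + 1 + s) := Nat.mul_le_mul_right _ (Nat.le_self_pow (by norm_num) n)
  -- the square identity
  have hsq : (n * 2 ^ (2 * h + 1 + s) - b) ^ 2 = b ^ 2 + (n ^ 2 * 2 ^ (2 * h + 1 + s) - 2 * n * b) * 2 ^ (2 * h + 1 + s) := by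
    obtain ⟨d, hd⟩ : ∃ d, n * 2 ^ (2 * h + 1 + s) = d + b := ⟨n * 2 ^ (2 * h + 1 + s) - b, by omega⟩
    obtain ⟨C, hC⟩ : ∃ C, n ^ 2 * 2 ^ (2 * h + 1 + s) = C + 2 * n * b := ⟨n ^ 2 * 2 ^ (2 * h + 1 + s) - 2 * n * b, by omega⟩
    have hd2 : n * 2 ^ (2 * h + 1 + s) - b = d := by omega
    have hC2 : n ^ 2 * 2 ^ (2 * h + 1 + s) - 2 * n * b = C := by omega
    rw [hd2, hC2]
    have hdz : (n:ℤ) * 2 ^ (2 * h + 1 + s) = d + b := by exact_mod_cast hd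
    have hCz : (n:ℤ) ^ 2 * 2 ^ (2 * h + 1 + s) = C + 2 * n * b := by exact_mod_cast hC
    have : (d:ℤ) ^ 2 = (b:ℤ) ^ 2 + (C:ℤ) * 2 ^ (2 * h + 1 + s) := by
      linear_combination ((b:ℤ) - d - n * 2 ^ (2 * h + 1 + s)) * hdz + (2:ℤ) ^ (2 * h + 1 + s) * hCz
    exact_mod_cast this
  -- C decomposition
  have hn2 : 1 ≤ n ^ 2 := Nat.one_le_pow _ _ hn1
  have en2 : n ^ 2 * 2 ^ (2 * h + 1 + s) = 2 ^ (2 * h + 1 + s) + (n ^ 2 - 1) * 2 ^ (2 * h + 1 + s) := by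
    nth_rewrite 1 [show n ^ 2 = (n ^ 2 - 1) + 1 from by omega]
    ring
  have eC : n ^ 2 * 2 ^ (2 * h + 1 + s) - 2 * n * b = (2 ^ (2 * h + 1 + s) - 2 * n * b) + (n ^ 2 - 1) * 2 ^ (2 * h + 1 + s) := by omega
  -- D decomposition
  have hnm : n ≤ 2 ^ (h + s) := by omega
  have eDa : (2 ^ (h + s) - n) * 2 ^ (h + 1) = 2 ^ (2 * h + 1 + s) - n * 2 ^ (h + 1) := by
    rw [Nat.sub_mul, ← pow_add]
    congr 2
    omega
  have eD : 2 ^ (2 * h + 1 + s) - 2 * n * b = 2 * n + (2 ^ (h + s) - n) * 2 ^ (h + 1) := by omega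
  -- E identity
  have hE : b ^ 2 = 1 + (2 ^ (h - 1) - 1) * 2 ^ (h + 1) := by
    have hr2 : (2:ℕ) ^ h = 2 ^ (h - 1) * 2 := by
      rw [← pow_succ]
      congr 1
      omega
    have hr4 : (2:ℕ) ^ (h + 1) = 2 ^ (h - 1) * 4 := by
      rw [show h + 1 = (h - 1) + 2 from by omega, pow_add]
      norm_num
    obtain ⟨r, hr⟩ : ∃ r, 2 ^ (h - 1) = r + 1 :=
      ⟨2 ^ (h - 1) - 1, by have : (1:ℕ) ≤ 2 ^ (h-1) := Nat.one_le_two_pow; omega⟩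
    have hbr : b = 2 * r + 1 := by omega
    rw [hbr, hr4, hr]
    simp only [Nat.add_sub_cancel]
    ring
  have hElt : b ^ 2 < 2 ^ (2 * h + 1 + s) := by
    have hb1 : b ^ 2 ≤ b * 2 ^ h := by
      rw [pow_two]
      exact Nat.mul_le_mul_left b (by omega)
    have hb2 : b * 2 ^ h < 2 ^ h * 2 ^ h := by
      apply Nat.mul_lt_mul_of_lt_of_le (by omega) (le_refl _)
      omega
    omega
  have h1lt : (1:ℕ) < 2 ^ (h + 1) := by
    rw [pow_succ]; omega
  have h2n' : 2 * n < 2 ^ (h + 1) := by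
    rw [pow_succ]; omega
  -- values
  have v1 : B (b ^ 2) = h := by
    rw [hE, B_split (h + 1) 1 _ h1lt, B_one, B_pow_sub_one]
    omega
  have v2 : B (2 ^ (2 * h + 1 + s) - 2 * n * b) = h + s + 1 := by
    rw [eD, B_split (h + 1) (2 * n) _ h2n', B_two_mul]
    have := B_pow_sub (h + s) n hodd hn1 hnm
    omega
  have hDlt : 2 ^ (2 * h + 1 + s) - 2 * n * b < 2 ^ (2 * h + 1 + s) := by
    have hb1 : 1 ≤ b := by omega
    have : b ≤ 2 * n * b := Nat.le_mul_of_pos_left b (by omega)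
    omega
  have v3 : B (n ^ 2 * 2 ^ (2 * h + 1 + s) - 2 * n * b) + 1 = h + s + 1 + B (n ^ 2) := by
    rw [eC, B_split (2 * h + 1 + s) _ (n ^ 2 - 1) hDlt, v2]
    have := B_pred_odd (n ^ 2) (hodd.pow)
    omega
  rw [hb', hsq, B_split (2 * h + 1 + s) (b ^ 2) (n ^ 2 * 2 ^ (2 * h + 1 + s) - 2 * n * b) hElt, v1]
  omega

theorem stmt_12 (n k : ℕ) (hodd : Odd n)
    (hk1 : 2 ^ (k - 1) ≤ n) (hk2 : n < 2 ^ k)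
    (hB : 2 * B n + 1 ≤ B (n ^ 2)) :
    (∃ ν h : ℕ, 0 < ν ∧ 0 < h ∧
      B ((n * 2 ^ ν - (2 ^ h - 1)) ^ 2) = 2 * B (n * 2 ^ ν - (2 ^ h - 1)) - 1) ∧
    (B (n ^ 2) - 2 * B n + 2 * (k + 1) < 4 * k + 2 ∧
      B ((n * 2 ^ (B (n ^ 2) - 2 * B n + 2 * (k + 1)) - (2 ^ (k + 1) - 1)) ^ 2) =
        2 * B (n * 2 ^ (B (n ^ 2) - 2 * B n + 2 * (k + 1)) - (2 ^ (k + 1) - 1)) - 1) := by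
  have hn1 : 0 < n := hodd.pos
  have hBn : 1 ≤ B n := B_pos_of_odd n hodd
  have hn2k : n ^ 2 < 2 ^ (2 * k) := by
    have h1 : n ^ 2 < (2 ^ k) ^ 2 := Nat.pow_lt_pow_left hk2 (by norm_num)
    have h2 : ((2:ℕ) ^ k) ^ 2 = 2 ^ (2 * k) := by
      rw [← pow_mul]
      congr 1
      omega
    omega
  have hBn2 : B (n ^ 2) ≤ 2 * k := B_le (2 * k) _ hn2k
  obtain ⟨s, hs⟩ : ∃ s, B (n ^ 2) = 2 * B n + 1 + s := ⟨B (n ^ 2) - 2 * B n - 1, by omega⟩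
  have h2n : 2 * n < 2 ^ (k + 1) := by
    rw [pow_succ]
    omega
  obtain ⟨K1, K2⟩ := key n (k + 1) s hodd (by omega) h2n
  have hν : B (n ^ 2) - 2 * B n + 2 * (k + 1) = 2 * (k + 1) + 1 + s := by omega
  refine ⟨⟨2 * (k + 1) + 1 + s, k + 1, by omega, by omega, by omega⟩, by omega, ?_⟩
  rw [hν]
  omega
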